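/- arXiv:2310.08985 — 6 statements merged into one kernel-verified Lean document; each statement's English description precedes it below -/
import Mathlib

section
/- Let $0<\alpha<1$ and $\mu>0$ be real numbers, and set $$k(t)=\frac{t^{-\alpha}}{\Gamma(1-\alpha)}e^{-\mu t},\qquad l(t)=\frac{t^{\alpha-1}}{\Gamma(\alpha)}e^{-\mu t}+\mu\int_0^t\frac{s^{\alpha-1}}{\Gamma(\alpha)}e^{-\mu s}\,ds.$$ Then $(k\ast l)(t)=\int_0^t k(t-s)l(s)\,ds=1$ for every real $t>0$; that is, the tempered fractional pair $(k,l)$ satisfies the Sonine condition. -/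
/-!
Write `g_a(t) = t^(a-1) e^(-μt) / Γ(a)`. Then `k = g_(1-α)` and `l = g_α + μ ∫₀ g_α`. The Beta
integral gives the semigroup law `g_a ∗ g_b = g_(a+b)`, so `g_α ∗ g_(1-α) = g_1 = e^(-μt)`. For the
second summand, associativity of convolution gives `(∫₀ g_α) ∗ g_(1-α) = ∫₀ (g_α ∗ g_(1-α))`, hence
it contributes `μ ∫₀ᵗ e^(-μs) ds = 1 - e^(-μt)`, and the two parts add up to `1`.

Laplace convolution on `(0, ∞)` is Mathlib's convolution on `ℝ` of the extensions by zero.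
-/

open Real MeasureTheory Set

local notation:67 f " ⋆ " g:66 => convolution f g (ContinuousLinearMap.mul ℝ ℝ) volume

theorem integral_rpow_mul_sub_rpow {a b x : ℝ} (ha : 0 < a) (hb : 0 < b) (hx : 0 < x) :
    ∫ s in 0..x, s ^ (a - 1) * (x - s) ^ (b - 1) =
      x ^ (a + b - 1) * ProbabilityTheory.beta a b := by
  have key := Complex.betaIntegral_scaled a b hx
  rw [Complex.betaIntegral_eq_Gamma_mul_div _ _ (by simpa) (by simpa)] at key
  apply Complex.ofReal_injective
  rw [← intervalIntegral.integral_ofReal]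
  push_cast [ProbabilityTheory.beta, Complex.ofReal_cpow hx.le, ← Complex.Gamma_ofReal]
  rw [← key]
  refine intervalIntegral.integral_congr fun s hs => ?_
  rw [uIcc_of_le hx.le] at hs
  push_cast [Complex.ofReal_cpow hs.1, Complex.ofReal_cpow (sub_nonneg.2 hs.2)]
  rfl

section CausalConvolution

variable {f g : ℝ → ℝ}

theorem indicator_Ioi_mul_indicator_Ioi_sub (f g : ℝ → ℝ) (x : ℝ) :
    (fun s => (Ioi 0).indicator f s * (Ioi 0).indicator g (x - s)) =
      (Ioo 0 x).indicator fun s => f s * g (x - s) := by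
  ext s
  by_cases hs : 0 < s <;> by_cases hxs : s < x <;>
    simp [indicator, hs, hxs, sub_pos]

theorem convolution_indicator_Ioi_apply (f g : ℝ → ℝ) {x : ℝ} (hx : 0 ≤ x) :
    ((Ioi 0).indicator f ⋆ (Ioi 0).indicator g) x = ∫ s in 0..x, f s * g (x - s) := by
  rw [convolution_mul, indicator_Ioi_mul_indicator_Ioi_sub, integral_indicator measurableSet_Ioo,
    intervalIntegral.integral_of_le hx, integral_Ioc_eq_integral_Ioo]

theorem convolution_indicator_Ioi {φ : ℝ → ℝ}
    (h : ∀ x, 0 < x → ∫ s in 0..x, f s * g (x - s) = φ x) :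
    (Ioi 0).indicator f ⋆ (Ioi 0).indicator g = (Ioi 0).indicator φ := by
  ext x
  rcases lt_or_ge 0 x with hx | hx
  · rw [convolution_indicator_Ioi_apply f g hx.le, h x hx, indicator_of_mem (mem_Ioi.2 hx)]
  · rw [convolution_mul, indicator_Ioi_mul_indicator_Ioi_sub, Ioo_eq_empty (not_lt.2 hx),
      indicator_empty, integral_zero, indicator_of_notMem (notMem_Ioi.2 hx)]

theorem convolutionExistsAt_indicator_Ioi {x : ℝ}
    (h : 0 < x → IntervalIntegrable (fun s => f s * g (x - s)) volume 0 x) :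
    ConvolutionExistsAt ((Ioi 0).indicator f) ((Ioi 0).indicator g) x
      (ContinuousLinearMap.mul ℝ ℝ) := by
  rw [ConvolutionExistsAt]
  simp only [ContinuousLinearMap.mul_apply']
  rw [indicator_Ioi_mul_indicator_Ioi_sub, integrable_indicator_iff measurableSet_Ioo]
  rcases lt_or_ge 0 x with hx | hx
  · exact (intervalIntegrable_iff_integrableOn_Ioo_of_le hx.le).1 (h hx)
  · rw [Ioo_eq_empty (not_lt.2 hx)]
    exact integrableOn_empty

theorem integral_primitive_mul_sub {φ : ℝ → ℝ} (hfm : AEStronglyMeasurable f)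
    (hgm : AEStronglyMeasurable g) (hf0 : ∀ x, 0 < x → 0 ≤ f x) (hg0 : ∀ x, 0 < x → 0 ≤ g x)
    (hf : ∀ x, IntervalIntegrable f volume 0 x)
    (hfg : ∀ x, 0 < x → IntervalIntegrable (fun s => f s * g (x - s)) volume 0 x)
    (hfgφ : ∀ x, 0 < x → ∫ s in 0..x, f s * g (x - s) = φ x)
    {t : ℝ} (ht : 0 ≤ t) (hφ : IntervalIntegrable φ volume 0 t) :
    ∫ s in 0..t, (∫ u in 0..s, f u) * g (t - s) = ∫ x in 0..t, φ x := by
  set H := (Ioi (0:ℝ)).indicator fun _ => (1:ℝ)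
  have hHF : H ⋆ (Ioi 0).indicator f = (Ioi 0).indicator fun x => ∫ u in 0..x, f u :=
    convolution_indicator_Ioi fun x _ => by simp [intervalIntegral.integral_comp_sub_left]
  have hFG : (Ioi 0).indicator f ⋆ (Ioi 0).indicator g = (Ioi 0).indicator φ :=
    convolution_indicator_Ioi hfgφ
  have norm_indicator {u : ℝ → ℝ} (hu : ∀ x, 0 < x → 0 ≤ u x) :
      (fun x => ‖(Ioi 0).indicator u x‖) = (Ioi 0).indicator u :=
    funext fun x => norm_of_nonneg (indicator_nonneg (fun y hy => hu y hy) x)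
  have hassoc : ((H ⋆ (Ioi 0).indicator f) ⋆ (Ioi 0).indicator g) t =
      (H ⋆ ((Ioi 0).indicator f ⋆ (Ioi 0).indicator g)) t := by
    refine convolution_assoc _ _ _ _ (fun x y z => mul_assoc x y z)
      (aestronglyMeasurable_const.indicator measurableSet_Ioi)
      (hfm.indicator measurableSet_Ioi) (hgm.indicator measurableSet_Ioi)
      (ae_of_all _ fun y => convolutionExistsAt_indicator_Ioi fun _ => ?_)
      ?_ ?_
    · simpa using ((hf y).comp_sub_left y).symm
    · rw [norm_indicator hf0, norm_indicator hg0]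
      exact ae_of_all _ fun x => convolutionExistsAt_indicator_Ioi (hfg x)
    · rw [norm_indicator (fun _ _ => zero_le_one), norm_indicator hf0, norm_indicator hg0, hFG]
      exact convolutionExistsAt_indicator_Ioi fun _ => by
        simpa using (hφ.comp_sub_left t).symm
  rw [hHF, hFG, convolution_indicator_Ioi_apply _ _ ht,
    convolution_indicator_Ioi_apply _ _ ht] at hassoc
  simpa [intervalIntegral.integral_comp_sub_left] using hassoc

end CausalConvolution

noncomputable def temperedKernel (a μ t : ℝ) : ℝ := t ^ (a - 1) / Gamma a * exp (-μ * t)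

section TemperedKernel

variable {a b : ℝ} (μ : ℝ)

theorem temperedKernel_one : temperedKernel 1 μ = fun t => exp (-μ * t) := by
  ext t
  simp [temperedKernel]

theorem temperedKernel_nonneg (ha : 0 < a) {t : ℝ} (ht : 0 ≤ t) : 0 ≤ temperedKernel a μ t :=
  mul_nonneg (div_nonneg (rpow_nonneg ht _) (Gamma_pos_of_pos ha).le) (exp_nonneg _)

theorem measurable_temperedKernel : Measurable (temperedKernel a μ) := by
  unfold temperedKernel; fun_prop

theorem continuousOn_temperedKernel : ContinuousOn (temperedKernel a μ) {0}ᶜ :=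
  ((continuousOn_id.rpow_const fun _ ht => Or.inl ht).div_const _).mul (by fun_prop)

theorem intervalIntegrable_temperedKernel (ha : 0 < a) (x y : ℝ) :
    IntervalIntegrable (temperedKernel a μ) volume x y :=
  ((intervalIntegral.intervalIntegrable_rpow' (by linarith)).div_const _).mul_continuousOn
    (by fun_prop)

theorem intervalIntegrable_temperedKernel_comp_sub (ha : 0 < a) (x y z : ℝ) :
    IntervalIntegrable (fun s => temperedKernel a μ (x - s)) volume y z := by
  simpa using (intervalIntegrable_temperedKernel μ ha (x - y) (x - z)).comp_sub_left x

theorem intervalIntegrable_temperedKernel_mul_sub (ha : 0 < a) (hb : 0 < b) {x : ℝ}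
    (hx : 0 < x) :
    IntervalIntegrable (fun s => temperedKernel a μ s * temperedKernel b μ (x - s)) volume 0 x := by
  have hleft : IntervalIntegrable (fun s => temperedKernel a μ s * temperedKernel b μ (x - s))
      volume 0 (x / 2) := by
    refine (intervalIntegrable_temperedKernel μ ha 0 (x / 2)).mul_continuousOn
      ((continuousOn_temperedKernel μ).comp (by fun_prop) fun s hs => ?_)
    rw [uIcc_of_le (by linarith)] at hs
    exact sub_ne_zero.2 (by linarith [hs.2])
  have hright : IntervalIntegrable (fun s => temperedKernel a μ s * temperedKernel b μ (x - s))
      volume (x / 2) x := by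
    refine IntervalIntegrable.continuousOn_mul ?_ ((continuousOn_temperedKernel μ).mono
      fun s hs => ?_)
    · exact intervalIntegrable_temperedKernel_comp_sub μ hb x _ _
    · rw [uIcc_of_le (by linarith)] at hs
      exact ne_of_gt (by linarith [hs.1])
  exact hleft.trans hright

theorem integral_temperedKernel_mul_sub (ha : 0 < a) (hb : 0 < b) {x : ℝ} (hx : 0 < x) :
    ∫ s in 0..x, temperedKernel a μ s * temperedKernel b μ (x - s) = temperedKernel (a + b) μ x := by
  have hsplit (s : ℝ) : temperedKernel a μ s * temperedKernel b μ (x - s) =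
      s ^ (a - 1) * (x - s) ^ (b - 1) * (exp (-μ * x) / (Gamma a * Gamma b)) := by
    rw [temperedKernel, temperedKernel, show -μ * x = -μ * s + -μ * (x - s) by ring, exp_add]
    ring
  simp_rw [hsplit]
  rw [intervalIntegral.integral_mul_const, integral_rpow_mul_sub_rpow ha hb hx,
    ProbabilityTheory.beta, temperedKernel]
  have := Gamma_pos_of_pos ha
  have := Gamma_pos_of_pos hb
  field_simp

theorem integral_primitive_temperedKernel_mul_sub (ha : 0 < a) (hb : 0 < b) {t : ℝ}
    (ht : 0 ≤ t) :
    ∫ s in 0..t, (∫ u in 0..s, temperedKernel a μ u) * temperedKernel b μ (t - s) =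
      ∫ x in 0..t, temperedKernel (a + b) μ x :=
  integral_primitive_mul_sub (measurable_temperedKernel μ).aestronglyMeasurable
    (measurable_temperedKernel μ).aestronglyMeasurable
    (fun _ hx => temperedKernel_nonneg μ ha hx.le) (fun _ hx => temperedKernel_nonneg μ hb hx.le)
    (intervalIntegrable_temperedKernel μ ha 0)
    (fun _ hx => intervalIntegrable_temperedKernel_mul_sub μ ha hb hx)
    (fun _ hx => integral_temperedKernel_mul_sub μ ha hb hx) ht
    (intervalIntegrable_temperedKernel μ (add_pos ha hb) 0 t)

theorem intervalIntegrable_primitive_temperedKernel_mul_sub (ha : 0 < a) (hb : 0 < b) (t : ℝ) :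
    IntervalIntegrable
      (fun s => (∫ u in 0..s, temperedKernel a μ u) * temperedKernel b μ (t - s)) volume 0 t :=
  (intervalIntegrable_temperedKernel_comp_sub μ hb t 0 t).continuousOn_mul
    (intervalIntegral.continuous_primitive (intervalIntegrable_temperedKernel μ ha) 0).continuousOn

end TemperedKernel

theorem mul_integral_exp_neg_mul (μ t : ℝ) : μ * ∫ x in 0..t, exp (-μ * x) = 1 - exp (-μ * t) := by
  have hderiv (x : ℝ) : HasDerivAt (fun x => -exp (-μ * x)) (μ * exp (-μ * x)) x :=
    ((hasDerivAt_id' x).const_mul (-μ)).exp.neg.congr_deriv (by ring)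
  rw [← intervalIntegral.integral_const_mul, intervalIntegral.integral_eq_sub_of_hasDerivAt
    (fun x _ => hderiv x) (Continuous.intervalIntegrable (by fun_prop) _ _), mul_zero, exp_zero]
  ring

theorem sonine_tempered_general (α μ : ℝ) (hα0 : 0 < α) (hα1 : α < 1)
    (k l : ℝ → ℝ)
    (hk : ∀ t, k t = t ^ (-α) / Real.Gamma (1 - α) * Real.exp (-μ * t))
    (hl : ∀ t, l t = t ^ (α - 1) / Real.Gamma α * Real.exp (-μ * t)
        + μ * ∫ s in (0:ℝ)..t, s ^ (α - 1) / Real.Gamma α * Real.exp (-μ * s))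
    (t : ℝ) (ht : 0 < t) :
    ∫ s in (0:ℝ)..t, k (t - s) * l s = 1 := by
  have hβ : 0 < 1 - α := sub_pos.2 hα1
  obtain rfl : k = temperedKernel (1 - α) μ :=
    funext fun x => by rw [hk, temperedKernel, sub_sub_cancel_left]
  obtain rfl : l = fun x => temperedKernel α μ x + μ * ∫ s in 0..x, temperedKernel α μ s :=
    funext hl
  calc ∫ s in 0..t, temperedKernel (1 - α) μ (t - s) *
        (temperedKernel α μ s + μ * ∫ u in 0..s, temperedKernel α μ u)
      = (∫ s in 0..t, temperedKernel α μ s * temperedKernel (1 - α) μ (t - s)) + μ *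
          ∫ s in 0..t, (∫ u in 0..s, temperedKernel α μ u) * temperedKernel (1 - α) μ (t - s) := by
        rw [← intervalIntegral.integral_const_mul, ← intervalIntegral.integral_add
          (intervalIntegrable_temperedKernel_mul_sub μ hα0 hβ ht)
          ((intervalIntegrable_primitive_temperedKernel_mul_sub μ hα0 hβ t).const_mul μ)]
        congr 1 with s
        ring
    _ = exp (-μ * t) + μ * ∫ x in 0..t, exp (-μ * x) := by
        rw [integral_temperedKernel_mul_sub μ hα0 hβ ht,
          integral_primitive_temperedKernel_mul_sub μ hα0 hβ ht.le, add_sub_cancel,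
          temperedKernel_one]
    _ = 1 := by rw [mul_integral_exp_neg_mul]; ring

/-- The tempered fractional pair satisfies the Sonine condition. -/
theorem sonine_tempered (α μ : ℝ) (hα0 : 0 < α) (hα1 : α < 1) (hμ : 0 < μ)
    (k l : ℝ → ℝ)
    (hk : ∀ t, k t = t ^ (-α) / Real.Gamma (1 - α) * Real.exp (-μ * t))
    (hl : ∀ t, l t = t ^ (α - 1) / Real.Gamma α * Real.exp (-μ * t)
        + μ * ∫ s in (0:ℝ)..t, s ^ (α - 1) / Real.Gamma α * Real.exp (-μ * s))
    (t : ℝ) (ht : 0 < t) :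
    ∫ s in (0:ℝ)..t, k (t - s) * l s = 1 :=
  sonine_tempered_general α μ hα0 hα1 k l hk hl t ht
end

section
/- Let $0<\alpha<\beta<1$ be real numbers and define, for $t>0$, $$k(t)=\frac{t^{\alpha-\beta}}{\Gamma(1-\beta+\alpha)}+\frac{t^{-\beta}}{\Gamma(1-\beta)},\qquad l(t)=t^{\beta-1}\sum_{m=0}^{\infty}\frac{(-1)^m\,t^{\alpha m}}{\Gamma(\alpha m+\beta)},$$ i.e. $l(t)=t^{\beta-1}E_{\alpha,\beta}(-t^{\alpha})$ where $E_{\alpha,\beta}$ is the Mittag-Leffler function. Then $(k\ast l)(t)=\int_0^t k(t-s)l(s)\,ds=1$ for every real $t>0$; that is, the pair $(k,l)$ satisfies the Sonine condition. -/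
open Real MeasureTheory Filter


lemma beta_integrable {a b t : ℝ} (ha : 0 < a) (hb : 0 < b) (ht : 0 < t) :
    IntervalIntegrable (fun s => s ^ (a - 1) * (t - s) ^ (b - 1)) volume 0 t := by
  have h2 : (0:ℝ) < t/2 := by linarith
  have h1 : IntervalIntegrable (fun s => s ^ (a - 1) * (t - s) ^ (b - 1)) volume 0 (t/2) := by
    apply IntervalIntegrable.mul_continuousOn
    · exact intervalIntegral.intervalIntegrable_rpow' (by linarith)
    · intro x hx
      rw [Set.uIcc_of_le h2.le] at hx
      have : ContinuousAt (fun s : ℝ => (t - s) ^ (b-1)) x :=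
        ContinuousAt.rpow_const ((continuous_const.sub continuous_id).continuousAt)
          (Or.inl (sub_ne_zero.mpr (by cases hx; intro h; subst h; linarith)))
      exact this.continuousWithinAt
  have h2' : IntervalIntegrable (fun s => s ^ (a - 1) * (t - s) ^ (b - 1)) volume (t/2) t := by
    apply IntervalIntegrable.continuousOn_mul
    · have := (intervalIntegral.intervalIntegrable_rpow' (a := 0) (b := t/2)
        (r := b - 1) (by linarith)).comp_sub_left t
      simpa [sub_half] using this.symm
    · intro x hx
      rw [Set.uIcc_of_le (by linarith : t/2 ≤ t)] at hx
      have : ContinuousAt (fun s : ℝ => s ^ (a-1)) x :=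
        ContinuousAt.rpow_const continuousAt_id
          (Or.inl (show x ≠ 0 from (by cases hx; linarith : (0:ℝ) < x).ne'))
      exact this.continuousWithinAt
  exact h1.trans h2'

lemma beta_value {a b t : ℝ} (ha : 0 < a) (hb : 0 < b) (ht : 0 < t) :
    ∫ s in (0:ℝ)..t, s ^ (a - 1) * (t - s) ^ (b - 1)
      = Real.Gamma a * Real.Gamma b / Real.Gamma (a + b) * t ^ (a + b - 1) := by
  have hab : (0:ℝ) < a + b := by linarith
  have hΓ : Complex.Gamma (a + b : ℝ) ≠ 0 := by
    rw [Complex.Gamma_ofReal]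
    exact_mod_cast (Real.Gamma_pos_of_pos hab).ne'
  have hc : ∫ x in (0:ℝ)..t, (x : ℂ) ^ ((a:ℂ) - 1) * ((t : ℂ) - x) ^ ((b:ℂ) - 1) =
      (t : ℂ) ^ ((a:ℂ) + b - 1) * Complex.betaIntegral a b :=
    Complex.betaIntegral_scaled a b ht
  have hbeta : Complex.betaIntegral a b =
      Complex.Gamma a * Complex.Gamma b / Complex.Gamma ((a:ℂ) + b) := by
    have := Complex.Gamma_mul_Gamma_eq_betaIntegral (s := (a:ℂ)) (t := (b:ℂ))
      (by simpa using ha) (by simpa using hb)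
    have hΓ' : Complex.Gamma ((a:ℂ)+b) ≠ 0 := by push_cast at hΓ; exact hΓ
    rw [eq_div_iff hΓ', mul_comm]
    exact this.symm
  have hcongr : ∫ x in (0:ℝ)..t, (x : ℂ) ^ ((a:ℂ) - 1) * ((t : ℂ) - x) ^ ((b:ℂ) - 1)
      = ((∫ s in (0:ℝ)..t, s ^ (a - 1) * (t - s) ^ (b - 1) : ℝ) : ℂ) := by
    rw [← intervalIntegral.integral_ofReal]
    refine intervalIntegral.integral_congr fun x hx => ?_
    rw [Set.uIcc_of_le ht.le] at hx
    rw [Complex.ofReal_mul, Complex.ofReal_cpow hx.1, Complex.ofReal_cpow (by linarith [hx.2] : (0:ℝ) ≤ t - x)]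
    push_cast; ring
  rw [hcongr, hbeta] at hc
  have : ((∫ s in (0:ℝ)..t, s ^ (a - 1) * (t - s) ^ (b - 1) : ℝ) : ℂ)
      = ((Real.Gamma a * Real.Gamma b / Real.Gamma (a + b) * t ^ (a + b - 1) : ℝ) : ℂ) := by
    rw [hc]
    push_cast [← Complex.Gamma_ofReal, Complex.ofReal_cpow ht.le]
    ring
  exact_mod_cast this

lemma gamma_ratio {α : ℝ} (hα0 : 0 < α) (hα1 : α < 1) {y : ℝ} (hy : 1 ≤ y) :
    y * Real.Gamma y ≤ Real.Gamma (y + α) * (y + α) ^ (1 - α) := by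
  have hy0 : (0:ℝ) < y := by linarith
  have hyα : (0:ℝ) < y + α := by linarith
  have hconv := Real.convexOn_log_Gamma.2 (Set.mem_Ioi.mpr hyα)
    (Set.mem_Ioi.mpr (by linarith : (0:ℝ) < y + α + 1)) hα0.le
    (by linarith : (0:ℝ) ≤ 1 - α) (by ring)
  have hcomb : α • (y + α) + (1 - α) • (y + α + 1) = y + 1 := by
    simp only [smul_eq_mul]; ring
  rw [hcomb] at hconv
  simp only [Function.comp_apply, smul_eq_mul] at hconv
  have h1 : Real.Gamma (y + 1) = y * Real.Gamma y := Real.Gamma_add_one hy0.ne'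
  have h2 : Real.Gamma (y + α + 1) = (y + α) * Real.Gamma (y + α) := Real.Gamma_add_one hyα.ne'
  rw [h1, h2] at hconv
  have hΓy : 0 < Real.Gamma y := Real.Gamma_pos_of_pos hy0
  have hΓyα : 0 < Real.Gamma (y + α) := Real.Gamma_pos_of_pos hyα
  have hrhs : α * Real.log (Real.Gamma (y + α)) + (1 - α) * Real.log ((y + α) * Real.Gamma (y + α))
      = Real.log (Real.Gamma (y + α) * (y + α) ^ (1 - α)) := by
    rw [Real.log_mul hyα.ne' hΓyα.ne', Real.log_mul hΓyα.ne' (by positivity),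
      Real.log_rpow hyα]
    ring
  rw [hrhs] at hconv
  exact (Real.log_le_log_iff (by positivity) (by positivity)).mp hconv

lemma ml_summable {α c : ℝ} (hα0 : 0 < α) (hα1 : α < 1) (hc : 0 < c) {x : ℝ} (hx : 0 < x) :
    Summable (fun n : ℕ => x ^ (α * n) / Real.Gamma (α * n + c)) := by
  apply summable_of_ratio_norm_eventually_le (r := 1/2) (by norm_num)
  have htend : Tendsto (fun n : ℕ => α * n + c) atTop atTop := by
    apply Tendsto.atTop_add _ tendsto_const_nhds
    exact Tendsto.const_mul_atTop hα0 tendsto_natCast_atTop_atTop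
  filter_upwards [htend.eventually_ge_atTop 1,
    htend.eventually_ge_atTop ((4:ℝ) ^ (1/α) * x),
    htend.eventually_ge_atTop α] with n h1 h4 hαle
  set y := α * n + c with hy
  have hy0 : (0:ℝ) < y := by linarith
  have hΓy : 0 < Real.Gamma y := Real.Gamma_pos_of_pos hy0
  have hΓyα : 0 < Real.Gamma (y + α) := Real.Gamma_pos_of_pos (by linarith)
  -- key : 2 * x ^ α * Real.Gamma y ≤ Real.Gamma (y + α)
  have hkey : 2 * x ^ α * Real.Gamma y ≤ Real.Gamma (y + α) := by
    have hr := gamma_ratio hα0 hα1 h1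
    have hb : (y + α) ^ (1 - α) ≤ 2 * y ^ (1 - α) := by
      calc (y + α) ^ (1 - α) ≤ (2 * y) ^ (1 - α) :=
            Real.rpow_le_rpow (by linarith) (by linarith) (by linarith)
        _ = 2 ^ (1 - α) * y ^ (1 - α) := Real.mul_rpow (by norm_num) hy0.le
        _ ≤ 2 * y ^ (1 - α) := by
            apply mul_le_mul_of_nonneg_right _ (by positivity)
            calc (2:ℝ) ^ (1-α) ≤ 2 ^ (1:ℝ) :=
                  Real.rpow_le_rpow_of_exponent_le (by norm_num) (by linarith)
              _ = 2 := Real.rpow_one 2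
    have hx4 : 4 * x ^ α ≤ y ^ α := by
      calc 4 * x ^ α = ((4:ℝ) ^ (1/α) * x) ^ α := by
            rw [Real.mul_rpow (by positivity) hx.le,
              ← Real.rpow_mul (by norm_num : (0:ℝ) ≤ 4), one_div,
              inv_mul_cancel₀ hα0.ne', Real.rpow_one]
        _ ≤ y ^ α := Real.rpow_le_rpow (by positivity) h4 hα0.le
    have hy_split : y = y ^ α * y ^ (1 - α) := by
      rw [← Real.rpow_add hy0]; norm_num
    -- y * Γ y ≤ Γ(y+α) * (y+α)^(1-α) ≤ Γ(y+α) * 2 y^(1-α)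
    have h5 : y * Real.Gamma y ≤ Real.Gamma (y + α) * (2 * y ^ (1 - α)) :=
      hr.trans (mul_le_mul_of_nonneg_left hb hΓyα.le)
    -- also 4 x^α y^(1-α) Γ y ≤ y^α y^(1-α) Γ y = y Γ y
    have h6 : 2 * x ^ α * Real.Gamma y * (2 * y ^ (1 - α)) ≤ y * Real.Gamma y := by
      have h7 : 4 * x ^ α * (y ^ (1-α) * Real.Gamma y) ≤ y ^ α * (y ^ (1-α) * Real.Gamma y) :=
        mul_le_mul_of_nonneg_right hx4 (by positivity)
      calc 2 * x ^ α * Real.Gamma y * (2 * y ^ (1 - α))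
          = 4 * x ^ α * (y ^ (1-α) * Real.Gamma y) := by ring
        _ ≤ y ^ α * (y ^ (1-α) * Real.Gamma y) := h7
        _ = (y ^ α * y ^ (1-α)) * Real.Gamma y := by ring
        _ = y * Real.Gamma y := by rw [← Real.rpow_add hy0]; norm_num
    have := h6.trans h5
    exact le_of_mul_le_mul_right this (by positivity)
  -- now the ratio bound
  have hxn : (0:ℝ) < x ^ (α * n) := Real.rpow_pos_of_pos hx _
  have hexp : x ^ (α * ((n:ℝ) + 1)) = x ^ (α * n) * x ^ α := by
    rw [← Real.rpow_add hx]; ring_nf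
  rw [Real.norm_of_nonneg (by positivity), Real.norm_of_nonneg (by positivity)]
  push_cast
  rw [hexp]
  have harg : α * ((n:ℝ) + 1) + c = y + α := by rw [hy]; ring
  rw [harg, div_le_iff₀ hΓyα]
  have h8 : 1/2 * (x ^ (α * (n:ℝ)) / Real.Gamma y) * (2 * x ^ α * Real.Gamma y)
      ≤ 1/2 * (x ^ (α * (n:ℝ)) / Real.Gamma y) * Real.Gamma (y + α) :=
    mul_le_mul_of_nonneg_left hkey (by positivity)
  calc x ^ (α * (n:ℝ)) * x ^ α
      = 1/2 * (x ^ (α * (n:ℝ)) / Real.Gamma y) * (2 * x ^ α * Real.Gamma y) := by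
        field_simp
    _ ≤ 1/2 * (x ^ (α * (n:ℝ)) / Real.Gamma y) * Real.Gamma (y + α) := h8
    _ = 1 / 2 * (x ^ (α * (n:ℝ)) / Real.Gamma y) * Real.Gamma (y + α) := by ring

/-- The pair `k(t) = g_{1-β+α}(t) + g_{1-β}(t)`, `l(t) = t^(β-1) E_{α,β}(-t^α)` satisfies the
Sonine condition, where the Mittag-Leffler function is written via its power series. -/
theorem sonine_mittag_leffler (α β : ℝ) (hα0 : 0 < α) (hαβ : α < β) (hβ1 : β < 1)
    (k l : ℝ → ℝ)
    (hk : ∀ t, k t = t ^ (α - β) / Real.Gamma (1 - β + α) + t ^ (-β) / Real.Gamma (1 - β))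
    (hl : ∀ t, l t = t ^ (β - 1) *
      ∑' m : ℕ, (-1 : ℝ) ^ m * t ^ (α * (m : ℝ)) / Real.Gamma (α * (m : ℝ) + β))
    (t : ℝ) (ht : 0 < t) :
    ∫ s in (0:ℝ)..t, k (t - s) * l s = 1 := by
  have ha1 : (0:ℝ) < 1 - β + α := by linarith
  have ha2 : (0:ℝ) < 1 - β := by linarith
  have hΓa1 : 0 < Real.Gamma (1 - β + α) := Real.Gamma_pos_of_pos ha1
  have hΓa2 : 0 < Real.Gamma (1 - β) := Real.Gamma_pos_of_pos ha2
  have hβ0 : (0:ℝ) < β := hα0.trans hαβ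
  have hcm : ∀ m : ℕ, (0:ℝ) < α * (m:ℝ) + β := fun m => by positivity
  have hΓcm : ∀ m : ℕ, 0 < Real.Gamma (α * (m:ℝ) + β) :=
    fun m => Real.Gamma_pos_of_pos (hcm m)
  set F' : ℕ → ℝ → ℝ := fun m s =>
    s ^ (α * (m:ℝ) + β - 1) * (t - s) ^ (1 - β + α - 1) *
        (Real.Gamma (1 - β + α) * Real.Gamma (α * (m:ℝ) + β))⁻¹ +
      s ^ (α * (m:ℝ) + β - 1) * (t - s) ^ (1 - β - 1) *
        (Real.Gamma (1 - β) * Real.Gamma (α * (m:ℝ) + β))⁻¹ with hF'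
  set F : ℕ → ℝ → ℝ := fun m s => (-1 : ℝ)^m * F' m s with hF
  -- interval integrability
  have hint' : ∀ m : ℕ, IntervalIntegrable (F' m) volume 0 t := fun m =>
    ((beta_integrable (hcm m) ha1 ht).mul_const _).add
      ((beta_integrable (hcm m) ha2 ht).mul_const _)
  have hint : ∀ m : ℕ, IntervalIntegrable (F m) volume 0 t := fun m =>
    (hint' m).const_mul _
  -- values of the integrals
  have hval' : ∀ m : ℕ, ∫ s in (0:ℝ)..t, F' m s =
      t ^ (α * (m:ℝ) + α) / Real.Gamma (α * (m:ℝ) + α + 1) +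
      t ^ (α * (m:ℝ)) / Real.Gamma (α * (m:ℝ) + 1) := by
    intro m
    rw [hF']
    rw [intervalIntegral.integral_add ((beta_integrable (hcm m) ha1 ht).mul_const _)
      ((beta_integrable (hcm m) ha2 ht).mul_const _),
      intervalIntegral.integral_mul_const, intervalIntegral.integral_mul_const,
      beta_value (hcm m) ha1 ht, beta_value (hcm m) ha2 ht]
    have e1 : α * (m:ℝ) + β + (1 - β + α) = α * (m:ℝ) + α + 1 := by ring
    have e3 : α * (m:ℝ) + β + (1 - β) = α * (m:ℝ) + 1 := by ring
    rw [e1, e3]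
    have e2 : α * (m:ℝ) + α + 1 - 1 = α * (m:ℝ) + α := by ring
    have e4 : α * (m:ℝ) + 1 - 1 = α * (m:ℝ) := by ring
    rw [e2, e4]
    have h5 : 0 < Real.Gamma (α * (m:ℝ) + α + 1) := Real.Gamma_pos_of_pos (by positivity)
    have h6 : 0 < Real.Gamma (α * (m:ℝ) + 1) := Real.Gamma_pos_of_pos (by positivity)
    have n1 := hΓa1.ne'
    have n2 := hΓa2.ne'
    have n3 := (hΓcm m).ne'
    field_simp
  -- nonnegativity of F' on Ioc
  have hF'nn : ∀ m : ℕ, ∀ s ∈ Set.Ioc (0:ℝ) t, 0 ≤ F' m s := by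
    intro m s hs
    have h1 : (0:ℝ) ≤ s := hs.1.le
    have h2 : (0:ℝ) ≤ t - s := by linarith [hs.2]
    rw [hF']
    have r1 := Real.rpow_nonneg h1 (α * (m:ℝ) + β - 1)
    have r2 := Real.rpow_nonneg h2 (1 - β + α - 1)
    have r3 := Real.rpow_nonneg h2 (1 - β - 1)
    exact add_nonneg
      (mul_nonneg (mul_nonneg r1 r2) (inv_nonneg.mpr (mul_nonneg hΓa1.le (hΓcm m).le)))
      (mul_nonneg (mul_nonneg r1 r3) (inv_nonneg.mpr (mul_nonneg hΓa2.le (hΓcm m).le)))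
  -- Integrability on the set
  have hFint : ∀ m : ℕ, Integrable (F m) (volume.restrict (Set.Ioc (0:ℝ) t)) := fun m =>
    (intervalIntegrable_iff_integrableOn_Ioc_of_le ht.le).mp (hint m)
  -- norm integrals
  have hnorm : ∀ m : ℕ, ∫ s in Set.Ioc (0:ℝ) t, ‖F m s‖ =
      t ^ (α * (m:ℝ) + α) / Real.Gamma (α * (m:ℝ) + α + 1) +
      t ^ (α * (m:ℝ)) / Real.Gamma (α * (m:ℝ) + 1) := by
    intro m
    rw [setIntegral_congr_fun measurableSet_Ioc
      (fun s hs => by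
        show ‖F m s‖ = F' m s
        rw [hF, Real.norm_eq_abs]
        simp only
        rw [abs_mul, abs_pow, abs_neg, abs_one, one_pow, one_mul,
          abs_of_nonneg (hF'nn m s hs)] ),
      ← intervalIntegral.integral_of_le ht.le, hval' m]
  -- summability of the norm integrals
  have hsum0 : Summable (fun n : ℕ => t ^ (α * (n:ℝ)) / Real.Gamma (α * (n:ℝ) + 1)) :=
    ml_summable hα0 (by linarith) one_pos ht
  have hsum1 : Summable (fun m : ℕ => t ^ (α * (m:ℝ) + α) / Real.Gamma (α * (m:ℝ) + α + 1)) := by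
    have := (summable_nat_add_iff 1).mpr hsum0
    refine this.congr fun n => ?_
    push_cast
    ring_nf
  have hFsum : Summable (fun m : ℕ => ∫ s in Set.Ioc (0:ℝ) t, ‖F m s‖) := by
    refine ((hsum1.add hsum0).congr fun m => ?_)
    rw [hnorm m]
  -- swap integral and sum
  have hswap := (hasSum_integral_of_summable_integral_norm hFint hFsum).tsum_eq
  -- pointwise identity
  have hpt : Set.EqOn (fun s => k (t - s) * l s) (fun s => ∑' m, F m s) (Set.Ioc 0 t) := by
    intro s hs
    have hs0 : (0:ℝ) < s := hs.1
    simp only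
    rw [hk, hl]
    have hA : ∀ m : ℕ, F m s =
        ((t - s) ^ (α - β) / Real.Gamma (1 - β + α) + (t - s) ^ (-β) / Real.Gamma (1 - β)) *
          (s ^ (β - 1) * ((-1:ℝ)^m * s ^ (α * (m:ℝ)) / Real.Gamma (α * (m:ℝ) + β))) := by
      intro m
      rw [hF, hF']
      simp only
      have hsplit : s ^ (α * (m:ℝ) + β - 1) = s ^ (β - 1) * s ^ (α * (m:ℝ)) := by
        rw [← Real.rpow_add hs0]; ring_nf
      have eA : (1:ℝ) - β + α - 1 = α - β := by ring
      have eB : (1:ℝ) - β - 1 = -β := by ring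
      rw [hsplit, eA, eB]
      have n1 := hΓa1.ne'
      have n2 := hΓa2.ne'
      have n3 := (hΓcm m).ne'
      field_simp
    rw [tsum_congr hA, tsum_mul_left, tsum_mul_left]
  rw [intervalIntegral.integral_of_le ht.le, setIntegral_congr_fun measurableSet_Ioc hpt,
    ← hswap]
  -- value of each integral
  have hFval : ∀ m : ℕ, (∫ s in Set.Ioc (0:ℝ) t, F m s) =
      (-1:ℝ)^m * (t ^ (α * (m:ℝ) + α) / Real.Gamma (α * (m:ℝ) + α + 1) +
        t ^ (α * (m:ℝ)) / Real.Gamma (α * (m:ℝ) + 1)) := by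
    intro m
    rw [← intervalIntegral.integral_of_le ht.le]
    have : ∫ s in (0:ℝ)..t, F m s = (-1:ℝ)^m * ∫ s in (0:ℝ)..t, F' m s := by
      rw [hF, ← intervalIntegral.integral_const_mul]
    rw [this, hval' m]
  rw [tsum_congr hFval]
  -- telescoping
  set f : ℕ → ℝ := fun n => (-1:ℝ)^n * (t ^ (α * (n:ℝ)) / Real.Gamma (α * (n:ℝ) + 1)) with hf
  have hfsum : Summable f := by
    apply Summable.of_norm
    refine hsum0.congr fun n => ?_
    rw [hf, norm_mul, norm_pow, norm_neg, norm_one, one_pow, one_mul, Real.norm_of_nonneg]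
    have := Real.Gamma_pos_of_pos (show (0:ℝ) < α * (n:ℝ) + 1 by positivity)
    positivity
  have hterm : ∀ m : ℕ, (-1:ℝ)^m * (t ^ (α * (m:ℝ) + α) / Real.Gamma (α * (m:ℝ) + α + 1) +
      t ^ (α * (m:ℝ)) / Real.Gamma (α * (m:ℝ) + 1)) = f m - f (m + 1) := by
    intro m
    rw [hf]
    simp only
    push_cast
    rw [pow_succ]
    ring_nf
  rw [tsum_congr hterm]
  have hfsum' : Summable (fun n : ℕ => f (n + 1)) := (summable_nat_add_iff 1).mpr hfsum
  rw [Summable.tsum_sub hfsum hfsum', Summable.tsum_eq_zero_add hfsum]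
  have hf0 : f 0 = 1 := by
    rw [hf]
    norm_num [Real.Gamma_one]
  rw [hf0]
  ring
end

section
/- Let $\varepsilon$ be a real number with $|\varepsilon|<1$ and let $v:[0,1]\to\mathbb{R}$ be twice continuously differentiable with $v(0)=v(1)=0$. Then $$\int_0^1\bigl(-v''(x)+\varepsilon\,v''(1-x)\bigr)v(x)\,dx\;\geq\;(1-|\varepsilon|)\,\pi^2\int_0^1 v(x)^2\,dx.$$ -/
/-!
Integrating by parts turns the form into `∫ v'² + ε ∫ v'(x) v'(1 - x)`, and since the reflection
`x ↦ 1 - x` preserves the `L²` norm, the cross term is at most `|ε| ∫ v'²` in absolute value.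
What remains is Wirtinger's inequality `π² ∫ v² ≤ ∫ v'²`. For `ω < π` pick a linear phase `φ` of
slope `ω` with `sin ∘ φ > 0` on the whole interval; then `F = ω v² cot φ` is smooth there and
vanishes at both ends because `v` does, while Picone's identity
`v'² - ω² v² - F' = (v' - ω v cot φ)²` makes the integrand dominate `F'`. Let `ω → π`.
-/

open Real MeasureTheory Set intervalIntegral

variable {v v' v'' f φ : ℝ → ℝ} {a b ω : ℝ}

theorem mapsTo_const_add_sub_Icc : MapsTo (fun x => a + b - x) (Icc a b) (Icc a b) :=
  fun _ hx => ⟨by linarith [hx.2], by linarith [hx.1]⟩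

theorem ContinuousOn.comp_reflect_Icc (hf : ContinuousOn f (Icc a b)) :
    ContinuousOn (fun x => f (a + b - x)) (Icc a b) :=
  hf.comp (continuous_const.sub continuous_id).continuousOn mapsTo_const_add_sub_Icc

theorem sq_mul_integral_sq_le_integral_deriv_sq_of_sin_ne_zero (hab : a ≤ b)
    (hφ : ∀ x, HasDerivAt φ ω x) (hsin : ∀ x ∈ Icc a b, sin (φ x) ≠ 0)
    (hv : ∀ x ∈ Icc a b, HasDerivAt v (v' x) x) (hv'c : ContinuousOn v' (Icc a b))
    (ha : v a = 0) (hb : v b = 0) :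
    ω ^ 2 * ∫ x in a..b, v x ^ 2 ≤ ∫ x in a..b, v' x ^ 2 := by
  have hvc : ContinuousOn v (Icc a b) := fun x hx => (hv x hx).continuousAt.continuousWithinAt
  have hF : ∀ x ∈ Icc a b, HasDerivAt (fun x => ω * v x ^ 2 * (cos (φ x) / sin (φ x)))
      (2 * ω * v x * v' x * (cos (φ x) / sin (φ x)) - ω ^ 2 * v x ^ 2 / sin (φ x) ^ 2) x := by
    intro x hx
    have hs := hsin x hx
    refine ((((hv x hx).fun_pow 2).const_mul ω).fun_mul
      ((hφ x).cos.fun_div (hφ x).sin hs)).congr_deriv ?_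
    field_simp
    linear_combination (-ω ^ 2 * v x ^ 2) * sin_sq_add_cos_sq (φ x)
  have hpicone : ∀ x ∈ Ioo a b,
      2 * ω * v x * v' x * (cos (φ x) / sin (φ x)) - ω ^ 2 * v x ^ 2 / sin (φ x) ^ 2
        ≤ v' x ^ 2 - ω ^ 2 * v x ^ 2 := by
    intro x hx
    have hs := hsin x (Ioo_subset_Icc_self hx)
    have hsq : v' x ^ 2 - ω ^ 2 * v x ^ 2
          - (2 * ω * v x * v' x * (cos (φ x) / sin (φ x)) - ω ^ 2 * v x ^ 2 / sin (φ x) ^ 2)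
        = (v' x - ω * v x * (cos (φ x) / sin (φ x))) ^ 2 := by
      field_simp
      linear_combination (-ω ^ 2 * v x ^ 2) * sin_sq_add_cos_sq (φ x)
    nlinarith [sq_nonneg (v' x - ω * v x * (cos (φ x) / sin (φ x)))]
  have hv2 : IntervalIntegrable (fun x => v x ^ 2) volume a b :=
    (hvc.pow 2).intervalIntegrable_of_Icc hab
  have hv'2 : IntervalIntegrable (fun x => v' x ^ 2) volume a b :=
    (hv'c.pow 2).intervalIntegrable_of_Icc hab
  have hFTC := sub_le_integral_of_hasDeriv_right_of_le
    (φ := fun x => v' x ^ 2 - ω ^ 2 * v x ^ 2) hab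
    (fun x hx => (hF x hx).continuousAt.continuousWithinAt)
    (fun x hx => (hF x (Ioo_subset_Icc_self hx)).hasDerivWithinAt)
    ((hv'c.pow 2).sub (continuousOn_const.mul (hvc.pow 2))).integrableOn_Icc hpicone
  rw [integral_sub hv'2 (hv2.const_mul _), intervalIntegral.integral_const_mul] at hFTC
  simp only [ha, hb] at hFTC
  linarith

theorem sq_mul_integral_sq_le_integral_deriv_sq (hab : a ≤ b) (hω : 0 ≤ ω)
    (hωπ : ω * (b - a) < π) (hv : ∀ x ∈ Icc a b, HasDerivAt v (v' x) x)
    (hv'c : ContinuousOn v' (Icc a b)) (ha : v a = 0) (hb : v b = 0) :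
    ω ^ 2 * ∫ x in a..b, v x ^ 2 ≤ ∫ x in a..b, v' x ^ 2 := by
  refine sq_mul_integral_sq_le_integral_deriv_sq_of_sin_ne_zero
    (φ := fun x => ω * (x - a) + (π - ω * (b - a)) / 2) hab (fun x => ?_) (fun x hx => ?_)
    hv hv'c ha hb
  · simpa using (((hasDerivAt_id x).sub_const a).const_mul ω).add_const ((π - ω * (b - a)) / 2)
  · have h₀ : 0 ≤ ω * (x - a) := mul_nonneg hω (by linarith [hx.1])
    have h₁ : ω * (x - a) ≤ ω * (b - a) := mul_le_mul_of_nonneg_left (by linarith [hx.2]) hω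
    exact (sin_pos_of_pos_of_lt_pi (by linarith) (by linarith)).ne'

theorem pi_sq_mul_integral_sq_le_sq_mul_integral_deriv_sq (hab : a < b)
    (hv : ∀ x ∈ Icc a b, HasDerivAt v (v' x) x) (hv'c : ContinuousOn v' (Icc a b))
    (ha : v a = 0) (hb : v b = 0) :
    π ^ 2 * ∫ x in a..b, v x ^ 2 ≤ (b - a) ^ 2 * ∫ x in a..b, v' x ^ 2 := by
  have hba : 0 < b - a := sub_pos.mpr hab
  have hlt : ∀ t ∈ Ioo 0 π,
      t ^ 2 * ∫ x in a..b, v x ^ 2 ≤ (b - a) ^ 2 * ∫ x in a..b, v' x ^ 2 := by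
    intro t ht
    have h := sq_mul_integral_sq_le_integral_deriv_sq (ω := t / (b - a)) hab.le
      (div_nonneg ht.1.le hba.le) (by rw [div_mul_cancel₀ _ hba.ne']; exact ht.2) hv hv'c ha hb
    calc t ^ 2 * ∫ x in a..b, v x ^ 2
        = (b - a) ^ 2 * ((t / (b - a)) ^ 2 * ∫ x in a..b, v x ^ 2) := by field_simp
      _ ≤ (b - a) ^ 2 * ∫ x in a..b, v' x ^ 2 := by gcongr
  refine le_of_tendsto ?_ (Filter.eventually_of_mem (Ioo_mem_nhdsLT pi_pos) hlt)
  exact ((continuous_pow 2).mul continuous_const).continuousAt.tendsto.mono_left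
    nhdsWithin_le_nhds

theorem abs_integral_mul_comp_reflect_le (hab : a ≤ b) (hf : ContinuousOn f (Icc a b)) :
    |∫ x in a..b, f x * f (a + b - x)| ≤ ∫ x in a..b, f x ^ 2 := by
  have hf2 : IntervalIntegrable (fun x => f x ^ 2) volume a b :=
    (hf.pow 2).intervalIntegrable_of_Icc hab
  have hfr2 : IntervalIntegrable (fun x => f (a + b - x) ^ 2) volume a b :=
    (hf.comp_reflect_Icc.pow 2).intervalIntegrable_of_Icc hab
  have hreflect : ∫ x in a..b, f (a + b - x) ^ 2 = ∫ x in a..b, f x ^ 2 := by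
    simpa using integral_comp_sub_left (fun x => f x ^ 2) (a + b) (a := a) (b := b)
  calc |∫ x in a..b, f x * f (a + b - x)|
      ≤ ∫ x in a..b, |f x * f (a + b - x)| := abs_integral_le_integral_abs hab
    _ ≤ ∫ x in a..b, (f x ^ 2 + f (a + b - x) ^ 2) / 2 := by
        refine integral_mono_on hab
          ((hf.mul hf.comp_reflect_Icc).abs.intervalIntegrable_of_Icc hab)
          ((hf2.add hfr2).div_const 2) fun x _ => ?_
        rw [abs_mul]
        nlinarith [two_mul_le_add_sq |f x| |f (a + b - x)|, sq_abs (f x), sq_abs (f (a + b - x))]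
    _ = ∫ x in a..b, f x ^ 2 := by
        rw [intervalIntegral.integral_div, integral_add hf2 hfr2, hreflect]
        ring

theorem integral_deriv_deriv_mul_eq_neg_integral_deriv_sq (hab : a ≤ b)
    (hv : ∀ x ∈ Icc a b, HasDerivAt v (v' x) x) (hv' : ∀ x ∈ Icc a b, HasDerivAt v' (v'' x) x)
    (hv''c : ContinuousOn v'' (Icc a b)) (ha : v a = 0) (hb : v b = 0) :
    ∫ x in a..b, v'' x * v x = -∫ x in a..b, v' x ^ 2 := by
  rw [← uIcc_of_le hab] at hv hv' hv''c
  have hv'c : ContinuousOn v' (uIcc a b) :=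
    fun x hx => (hv' x hx).continuousAt.continuousWithinAt
  have hparts := integral_mul_deriv_eq_deriv_mul hv hv' hv'c.intervalIntegrable
    hv''c.intervalIntegrable
  simp only [ha, hb, zero_mul, sub_zero, zero_sub] at hparts
  simp only [mul_comm (v'' _), hparts, sq]

theorem integral_deriv_deriv_comp_reflect_mul (hab : a ≤ b)
    (hv : ∀ x ∈ Icc a b, HasDerivAt v (v' x) x) (hv' : ∀ x ∈ Icc a b, HasDerivAt v' (v'' x) x)
    (hv''c : ContinuousOn v'' (Icc a b)) (ha : v a = 0) (hb : v b = 0) :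
    ∫ x in a..b, v'' (a + b - x) * v x = ∫ x in a..b, v' x * v' (a + b - x) := by
  have hw : ∀ x ∈ uIcc a b, HasDerivAt (fun x => v' (a + b - x)) (-v'' (a + b - x)) x :=
    fun x hx => (hv' _ (mapsTo_const_add_sub_Icc (uIcc_of_le hab ▸ hx))).comp_const_sub (a + b) x
  have hw'c : ContinuousOn (fun x => -v'' (a + b - x)) (uIcc a b) :=
    uIcc_of_le hab ▸ hv''c.comp_reflect_Icc.neg
  rw [← uIcc_of_le hab] at hv hv'
  have hv'c : ContinuousOn v' (uIcc a b) :=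
    fun x hx => (hv' x hx).continuousAt.continuousWithinAt
  have hparts := integral_mul_deriv_eq_deriv_mul hv hw hv'c.intervalIntegrable
    hw'c.intervalIntegrable
  simp only [ha, hb, zero_mul, sub_zero, zero_sub, mul_neg, intervalIntegral.integral_neg,
    neg_inj] at hparts
  simp only [mul_comm (v'' _), hparts]

theorem integral_involution_operator_mul_eq (ε : ℝ) (hab : a ≤ b)
    (hv : ∀ x ∈ Icc a b, HasDerivAt v (v' x) x) (hv' : ∀ x ∈ Icc a b, HasDerivAt v' (v'' x) x)
    (hv''c : ContinuousOn v'' (Icc a b)) (ha : v a = 0) (hb : v b = 0) :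
    ∫ x in a..b, (-(v'' x) + ε * v'' (a + b - x)) * v x
      = (∫ x in a..b, v' x ^ 2) + ε * ∫ x in a..b, v' x * v' (a + b - x) := by
  have hvc : ContinuousOn v (Icc a b) := fun x hx => (hv x hx).continuousAt.continuousWithinAt
  have hdiag : IntervalIntegrable (fun x => v'' x * v x) volume a b :=
    (hv''c.mul hvc).intervalIntegrable_of_Icc hab
  have hcross : IntervalIntegrable (fun x => v'' (a + b - x) * v x) volume a b :=
    (hv''c.comp_reflect_Icc.mul hvc).intervalIntegrable_of_Icc hab
  simp only [add_mul, neg_mul, mul_assoc]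
  rw [integral_add (f := fun x => -(v'' x * v x)) hdiag.neg (hcross.const_mul ε),
    intervalIntegral.integral_neg, intervalIntegral.integral_const_mul,
    integral_deriv_deriv_mul_eq_neg_integral_deriv_sq hab hv hv' hv''c ha hb,
    integral_deriv_deriv_comp_reflect_mul hab hv hv' hv''c ha hb, neg_neg]

/-- Coercivity (Poincaré-type lower bound) of the differential operator with involution
`L[v](x) = -v''(x) + ε v''(1-x)` under Dirichlet conditions `v(0) = v(1) = 0`. -/
theorem involution_operator_coercive (ε : ℝ) (hε : |ε| < 1)
    (v v' v'' : ℝ → ℝ)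
    (hv' : ∀ x ∈ Set.Icc (0:ℝ) 1, HasDerivAt v (v' x) x)
    (hv'' : ∀ x ∈ Set.Icc (0:ℝ) 1, HasDerivAt v' (v'' x) x)
    (hv''cont : ContinuousOn v'' (Set.Icc (0:ℝ) 1))
    (hv0 : v 0 = 0) (hv1 : v 1 = 0) :
    (1 - |ε|) * π ^ 2 * ∫ x in (0:ℝ)..1, (v x) ^ 2
      ≤ ∫ x in (0:ℝ)..1, (-(v'' x) + ε * v'' (1 - x)) * v x := by
  have hv'c : ContinuousOn v' (Icc 0 1) :=
    fun x hx => (hv'' x hx).continuousAt.continuousWithinAt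
  have hform := integral_involution_operator_mul_eq ε zero_le_one hv' hv'' hv''cont hv0 hv1
  have hcross := abs_integral_mul_comp_reflect_le zero_le_one hv'c
  have hwirt := pi_sq_mul_integral_sq_le_sq_mul_integral_deriv_sq zero_lt_one hv' hv'c hv0 hv1
  simp only [zero_add, sub_zero, one_pow, one_mul] at hform hcross hwirt
  have hcross_le : -(|ε| * ∫ x in (0:ℝ)..1, v' x ^ 2)
      ≤ ε * ∫ x in (0:ℝ)..1, v' x * v' (1 - x) :=
    calc -(|ε| * ∫ x in (0:ℝ)..1, v' x ^ 2)
        ≤ -|ε * ∫ x in (0:ℝ)..1, v' x * v' (1 - x)| := by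
          rw [abs_mul]
          exact neg_le_neg (mul_le_mul_of_nonneg_left hcross (abs_nonneg ε))
      _ ≤ ε * ∫ x in (0:ℝ)..1, v' x * v' (1 - x) := neg_abs_le _
  rw [hform]
  nlinarith [mul_le_mul_of_nonneg_left hwirt (by linarith : 0 ≤ 1 - |ε|)]
end

section
/- Let $\varepsilon$ be a real number with $|\varepsilon|<1$ and let $v:[0,1]\to\mathbb{R}$ be twice continuously differentiable with $v(0)=v(1)=0$. Then $$\int_0^1\bigl(-v''(x)+\varepsilon\,v''(1-x)\bigr)v(x)\,dx\;\geq\;(1-|\varepsilon|)\int_0^1 \bigl(v'(x)\bigr)^2\,dx.$$ -/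
open Real MeasureTheory

/-! Integrating by parts against `v` (the boundary terms vanish by the Dirichlet conditions)
turns the two terms of `-∫ L[v] v` into `∫ v'²` and `ε ∫ v'(x) v'(1 - x)`. By the pointwise
AM–GM inequality and the invariance of `∫₀¹ v'²` under `x ↦ 1 - x`, the cross term is at most
`|ε| ∫ v'²` in absolute value. -/

open Set intervalIntegral

theorem integral_mul_deriv_eq_neg_of_eq_zero {u u' w w' : ℝ → ℝ} {a b : ℝ}
    (hu : ∀ x ∈ uIcc a b, HasDerivAt u (u' x) x) (hw : ∀ x ∈ uIcc a b, HasDerivAt w (w' x) x)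
    (hu' : IntervalIntegrable u' volume a b) (hw' : IntervalIntegrable w' volume a b)
    (ha : u a = 0) (hb : u b = 0) :
    ∫ x in a..b, u x * w' x = -∫ x in a..b, u' x * w x := by
  rw [integral_mul_deriv_eq_deriv_mul hu hw hu' hw', ha, hb]
  ring

theorem abs_integral_mul_comp_sub_le_integral_sq {f : ℝ → ℝ} {a b : ℝ} (hab : a ≤ b)
    (hf : IntervalIntegrable (fun x => f x ^ 2) volume a b) :
    |∫ x in a..b, f x * f (a + b - x)| ≤ ∫ x in a..b, f x ^ 2 := by
  have hrefl : IntervalIntegrable (fun x => f (a + b - x) ^ 2) volume a b := by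
    simpa using (hf.comp_sub_left (a + b)).symm
  have hmean : ∫ x in a..b, (f x ^ 2 + f (a + b - x) ^ 2) / 2 = ∫ x in a..b, f x ^ 2 := by
    rw [intervalIntegral.integral_div, integral_add hf hrefl,
      integral_comp_sub_left (fun x => f x ^ 2)]
    simp only [add_sub_cancel_right, add_sub_cancel_left]
    ring
  rw [← hmean, ← Real.norm_eq_abs]
  refine norm_integral_le_of_norm_le hab (ae_of_all _ fun x _ => ?_) ((hf.add hrefl).div_const 2)
  rw [Real.norm_eq_abs, abs_mul, ← sq_abs (f x), ← sq_abs (f (a + b - x))]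
  linarith [two_mul_le_add_sq |f x| |f (a + b - x)|]

theorem involution_operator_gradient_bound_general (ε : ℝ)
    (v v' v'' : ℝ → ℝ)
    (hv' : ∀ x ∈ Set.Icc (0:ℝ) 1, HasDerivAt v (v' x) x)
    (hv'' : ∀ x ∈ Set.Icc (0:ℝ) 1, HasDerivAt v' (v'' x) x)
    (hv''cont : ContinuousOn v'' (Set.Icc (0:ℝ) 1))
    (hv0 : v 0 = 0) (hv1 : v 1 = 0) :
    (1 - |ε|) * ∫ x in (0:ℝ)..1, (v' x) ^ 2
      ≤ ∫ x in (0:ℝ)..1, (-(v'' x) + ε * v'' (1 - x)) * v x := by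
  rw [← uIcc_of_le zero_le_one] at hv' hv'' hv''cont
  have hreflect : MapsTo (fun x : ℝ => 1 - x) (uIcc 0 1) (uIcc 0 1) := by
    intro x hx
    rw [uIcc_of_le zero_le_one] at hx ⊢
    constructor <;> linarith [hx.1, hx.2]
  have hvc : ContinuousOn v (uIcc 0 1) := fun x hx => (hv' x hx).continuousAt.continuousWithinAt
  have hv'c : ContinuousOn v' (uIcc 0 1) := fun x hx => (hv'' x hx).continuousAt.continuousWithinAt
  have hv''refl : ContinuousOn (fun x => v'' (1 - x)) (uIcc 0 1) :=
    hv''cont.comp (by fun_prop) hreflect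
  have hw : ∀ x ∈ uIcc (0:ℝ) 1, HasDerivAt (fun y => -v' (1 - y)) (v'' (1 - x)) x :=
    fun x hx => by simpa using ((hv'' _ (hreflect hx)).comp_const_sub 1 x).fun_neg
  have hdiag : ∫ x in (0:ℝ)..1, v x * v'' x = -∫ x in (0:ℝ)..1, v' x ^ 2 := by
    simpa [sq] using integral_mul_deriv_eq_neg_of_eq_zero hv' hv''
      hv'c.intervalIntegrable hv''cont.intervalIntegrable hv0 hv1
  have hcross : ∫ x in (0:ℝ)..1, v x * v'' (1 - x) = ∫ x in (0:ℝ)..1, v' x * v' (1 - x) := by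
    simpa using integral_mul_deriv_eq_neg_of_eq_zero hv' hw
      hv'c.intervalIntegrable hv''refl.intervalIntegrable hv0 hv1
  have hsplit : ∫ x in (0:ℝ)..1, (-(v'' x) + ε * v'' (1 - x)) * v x
      = -(∫ x in (0:ℝ)..1, v x * v'' x) + ε * ∫ x in (0:ℝ)..1, v x * v'' (1 - x) := by
    rw [← intervalIntegral.integral_neg, ← intervalIntegral.integral_const_mul,
      ← intervalIntegral.integral_add]
    · exact integral_congr fun x _ => by ring
    · exact (hvc.mul hv''cont).neg.intervalIntegrable
    · exact ((hvc.mul hv''refl).const_smul ε).intervalIntegrable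
  have hJ := abs_integral_mul_comp_sub_le_integral_sq zero_le_one (hv'c.pow 2).intervalIntegrable
  rw [zero_add] at hJ
  rw [hsplit, hdiag, hcross, neg_neg]
  linarith [abs_mul ε (∫ x in (0:ℝ)..1, v' x * v' (1 - x)),
    neg_abs_le (ε * ∫ x in (0:ℝ)..1, v' x * v' (1 - x)),
    mul_le_mul_of_nonneg_left hJ (abs_nonneg ε)]

/-- Gradient lower bound for the differential operator with involution
`L[v](x) = -v''(x) + ε v''(1-x)` under Dirichlet conditions `v(0) = v(1) = 0`. -/
theorem involution_operator_gradient_bound (ε : ℝ) (hε : |ε| < 1)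
    (v v' v'' : ℝ → ℝ)
    (hv' : ∀ x ∈ Set.Icc (0:ℝ) 1, HasDerivAt v (v' x) x)
    (hv'' : ∀ x ∈ Set.Icc (0:ℝ) 1, HasDerivAt v' (v'' x) x)
    (hv''cont : ContinuousOn v'' (Set.Icc (0:ℝ) 1))
    (hv0 : v 0 = 0) (hv1 : v 1 = 0) :
    (1 - |ε|) * ∫ x in (0:ℝ)..1, (v' x) ^ 2
      ≤ ∫ x in (0:ℝ)..1, (-(v'' x) + ε * v'' (1 - x)) * v x :=
  involution_operator_gradient_bound_general ε v v' v'' hv' hv'' hv''cont hv0 hv1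
end

section
/- Let $l$ be a nonnegative locally integrable function on $(0,\infty)$, let $C>0$, and let $W:[0,\infty)\to\mathbb{R}$ be nonnegative and nonincreasing and satisfy $$W(t)+C\int_0^t l(t-s)\,W(s)\,ds\;\leq\;1\qquad\text{for all }t\geq0.$$ Then $$W(t)\;\leq\;\frac{1}{1+C\int_0^t l(s)\,ds}\qquad\text{for all }t\geq 0.$$ -/
open Real MeasureTheory

/-- Decay bound for nonnegative nonincreasing subsolutions of the scalar Volterra inequality
`W + C (l ∗ W) ≤ 1`. -/
theorem volterra_decay (l : ℝ → ℝ)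
    (hl_loc : LocallyIntegrableOn l (Set.Ioi 0))
    (hl_nn : ∀ s ∈ Set.Ioi (0:ℝ), 0 ≤ l s)
    (C : ℝ) (hC : 0 < C)
    (W : ℝ → ℝ)
    (hW_nn : ∀ t, 0 ≤ t → 0 ≤ W t)
    (hW_mono : AntitoneOn W (Set.Ici 0))
    (hineq : ∀ t, 0 ≤ t → W t + C * ∫ s in (0:ℝ)..t, l (t - s) * W s ≤ 1) :
    ∀ t, 0 ≤ t → W t ≤ 1 / (1 + C * ∫ s in (0:ℝ)..t, l s) := by
  intro t ht
  have hne : ∀ᵐ (s : ℝ), s ≠ t := by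
    refine ae_iff.mpr ?_
    simp only [ne_eq, not_not]
    simpa using Real.volume_singleton (x := t)
  -- nonnegativity of the convolution integral
  have hJ_nn : 0 ≤ ∫ s in (0:ℝ)..t, l (t - s) * W s := by
    rw [intervalIntegral.integral_of_le ht]
    refine setIntegral_nonneg_ae measurableSet_Ioc ?_
    filter_upwards [hne] with s hs hmem
    have hts : (0:ℝ) < t - s := sub_pos.mpr (lt_of_le_of_ne hmem.2 hs)
    exact mul_nonneg (hl_nn _ hts) (hW_nn s hmem.1.le)
  -- nonnegativity of ∫ l
  have hI_nn : 0 ≤ ∫ s in (0:ℝ)..t, l s := by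
    rw [intervalIntegral.integral_of_le ht]
    refine setIntegral_nonneg_ae measurableSet_Ioc ?_
    filter_upwards with s hmem
    exact hl_nn _ hmem.1
  have hpos : 0 < 1 + C * ∫ s in (0:ℝ)..t, l s := by positivity
  rw [le_div_iff₀ hpos]
  by_cases hlint : IntervalIntegrable l volume 0 t
  · -- the key comparison
    have hrefl : (∫ s in (0:ℝ)..t, l (t - s)) = ∫ s in (0:ℝ)..t, l s := by
      simpa using intervalIntegral.integral_comp_sub_left l t
    have hlint' : IntegrableOn (fun s => l (t - s)) (Set.Ioc 0 t) := by
      have := (hlint.comp_sub_left t)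
      rw [sub_zero, sub_self] at this
      exact (intervalIntegrable_iff_integrableOn_Ioc_of_le ht).mp this.symm
    have hWm : AEMeasurable W (volume.restrict (Set.Ioc 0 t)) :=
      aemeasurable_restrict_of_antitoneOn measurableSet_Ioc
        (hW_mono.mono (fun x hx => hx.1.le))
    have hprod : IntegrableOn (fun s => l (t - s) * W s) (Set.Ioc 0 t) := by
      refine Integrable.mono' (hlint'.mul_const (W 0)) ?_ ?_
      · exact hlint'.aestronglyMeasurable.mul hWm.aestronglyMeasurable
      · filter_upwards [ae_restrict_of_ae hne, ae_restrict_mem measurableSet_Ioc]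
          with s hs hmem
        have hts : (0:ℝ) < t - s := sub_pos.mpr (lt_of_le_of_ne hmem.2 hs)
        have hl0 : 0 ≤ l (t - s) := hl_nn _ hts
        have hW0 : 0 ≤ W s := hW_nn s hmem.1.le
        have hWle : W s ≤ W 0 := hW_mono (le_refl (0:ℝ)) (Set.mem_Ici.mpr hmem.1.le) hmem.1.le
        rw [Real.norm_eq_abs, abs_mul, abs_of_nonneg hl0, abs_of_nonneg hW0]
        exact mul_le_mul_of_nonneg_left hWle hl0
    have hkey : W t * (∫ s in (0:ℝ)..t, l s) ≤ ∫ s in (0:ℝ)..t, l (t - s) * W s := by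
      have h1 : (∫ s in Set.Ioc (0:ℝ) t, l (t - s) * W t) ≤
          ∫ s in Set.Ioc (0:ℝ) t, l (t - s) * W s := by
        refine setIntegral_mono_on_ae (hlint'.mul_const (W t)) hprod measurableSet_Ioc ?_
        filter_upwards [hne] with s hs hmem
        have hts : (0:ℝ) < t - s := sub_pos.mpr (lt_of_le_of_ne hmem.2 hs)
        have : W t ≤ W s := hW_mono (Set.mem_Ici.mpr hmem.1.le) (Set.mem_Ici.mpr ht) hmem.2
        exact mul_le_mul_of_nonneg_left this (hl_nn _ hts)
      have h2 : (∫ s in Set.Ioc (0:ℝ) t, l (t - s) * W t) =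
          W t * ∫ s in (0:ℝ)..t, l s := by
        rw [integral_mul_const, ← intervalIntegral.integral_of_le ht, hrefl, mul_comm]
      rw [← h2, intervalIntegral.integral_of_le ht]
      exact h1
    have hw := hineq t ht
    nlinarith [hkey, hW_nn t ht]
  · -- junk case: ∫ l = 0
    have hI0 : (∫ s in (0:ℝ)..t, l s) = 0 := intervalIntegral.integral_undef hlint
    rw [hI0]
    have hw := hineq t ht
    nlinarith [hJ_nn]
end

section
/- Let $T>0$, let $k:[0,\infty)\to\mathbb{R}$ be continuously differentiable, nonnegative and nonincreasing, let $C>0$, and let $v:[0,T]\to\mathbb{R}$ be continuous and nonnegative. Suppose that for every $t\in(0,T]$, $$\frac{d}{dt}\Bigl[\int_0^{t}k(t-s)\,v(s)\,ds\Bigr]+C\,v(t)\;\leq\;0$$ (the derivative exists since $k$ is continuously differentiable and $v$ is continuous). Then $v(t)=0$ for all $t\in[0,T]$. -/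
/-!
Extend `k` to a `C¹` function on `ℝ` and `v` continuously beyond `[0, T]`; the Leibniz integral
rule then makes `F = k ∗ v` differentiable on `[0, T]`. The inequality gives `F' ≤ -C v ≤ 0` on
`(0, T)`, so `F` is antitone on `[0, T]`, and with `F 0 = 0` and `F ≥ 0` this forces `F = 0`
there. Hence `F' = 0` on `(0, T)`, so `C v ≤ 0` and `v = 0` there, and on `[0, T]` by continuity.
-/

open MeasureTheory Set Filter Function

open scoped Interval Topology

section Leibniz

variable {E : Type*} [NormedAddCommGroup E] [NormedSpace ℝ E]

theorem hasDerivAt_integral_diag_of_continuousAt {g : ℝ → ℝ → E} {a : ℝ}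
    (hg : ContinuousAt (uncurry g) (a, a)) (hga : g a a = 0) :
    HasDerivAt (fun t => ∫ s in a..t, g t s) 0 a := by
  rw [hasDerivAt_iff_isLittleO]
  simp only [intervalIntegral.integral_same, sub_zero, smul_zero]
  refine Asymptotics.isLittleO_iff.2 fun ε hε => ?_
  obtain ⟨δ, hδ, hgδ⟩ := Metric.continuousAt_iff.1 hg ε hε
  filter_upwards [Metric.ball_mem_nhds a hδ] with t ht
  rw [Real.norm_eq_abs]
  refine intervalIntegral.norm_integral_le_of_norm_le_const fun s hs => ?_
  have hts : dist (t, s) (a, a) < δ := by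
    rw [Prod.dist_eq, Real.dist_eq, Real.dist_eq]
    exact max_lt ht ((abs_sub_left_of_mem_uIcc (uIoc_subset_uIcc hs)).trans_lt ht)
  simpa [hga] using (hgδ hts).le

theorem hasDerivAt_integral_diag [CompleteSpace E] {g : ℝ → ℝ → E} (hg : Continuous (uncurry g))
    (a : ℝ) :
    HasDerivAt (fun t => ∫ s in a..t, g t s) (g a a) a := by
  have hzero : HasDerivAt (fun t => ∫ s in a..t, (g t s - g a a)) 0 a :=
    hasDerivAt_integral_diag_of_continuousAt (by fun_prop) (sub_self _)
  have hconst : HasDerivAt (fun t => (t - a) • g a a) (g a a) a := by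
    simpa using ((hasDerivAt_id a).sub_const a).smul_const (g a a)
  convert hzero.add hconst using 1
  · funext t
    rw [Pi.add_apply, intervalIntegral.integral_sub ((hg.uncurry_left t).intervalIntegrable _ _)
      intervalIntegrable_const, intervalIntegral.integral_const, sub_add_cancel]
  · rw [zero_add]

theorem hasDerivAt_integral_param {g g' : ℝ → ℝ → E} (hg : Continuous (uncurry g))
    (hg' : Continuous (uncurry g')) (hderiv : ∀ t s, HasDerivAt (g · s) (g' t s) t)
    (a b t₀ : ℝ) :
    HasDerivAt (fun t => ∫ s in a..b, g t s) (∫ s in a..b, g' t₀ s) t₀ := by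
  obtain ⟨M, hM⟩ := ((isCompact_closedBall t₀ 1).prod isCompact_uIcc).exists_bound_of_continuousOn
    hg'.continuousOn
  exact (intervalIntegral.hasDerivAt_integral_of_dominated_loc_of_deriv_le (bound := fun _ => M)
    (Metric.ball_mem_nhds t₀ one_pos)
    (Eventually.of_forall fun t => (hg.uncurry_left t).aestronglyMeasurable)
    ((hg.uncurry_left t₀).intervalIntegrable _ _) (hg'.uncurry_left t₀).aestronglyMeasurable
    (ae_of_all _ fun s hs t ht =>
      hM (t, s) ⟨Metric.ball_subset_closedBall ht, uIoc_subset_uIcc hs⟩)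
    intervalIntegrable_const (ae_of_all _ fun s _ t _ => hderiv t s)).2

theorem hasDerivAt_integral_leibniz [CompleteSpace E] {g g' : ℝ → ℝ → E}
    (hg : Continuous (uncurry g)) (hg' : Continuous (uncurry g'))
    (hderiv : ∀ t s, HasDerivAt (g · s) (g' t s) t) (a t₀ : ℝ) :
    HasDerivAt (fun t => ∫ s in a..t, g t s) (g t₀ t₀ + ∫ s in a..t₀, g' t₀ s) t₀ := by
  have hsplit : (fun t => ∫ s in a..t, g t s) =
      fun t => (∫ s in a..t₀, g t s) + ∫ s in t₀..t, g t s := funext fun t =>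
    (intervalIntegral.integral_add_adjacent_intervals
      ((hg.uncurry_left t).intervalIntegrable _ _)
      ((hg.uncurry_left t).intervalIntegrable _ _)).symm
  rw [hsplit, add_comm]
  exact (hasDerivAt_integral_param hg hg' hderiv a t₀ t₀).add (hasDerivAt_integral_diag hg t₀)

end Leibniz

theorem hasDerivAt_integral_comp_sub_mul {K w : ℝ → ℝ} (hK : ContDiff ℝ 1 K) (hw : Continuous w)
    (a t₀ : ℝ) :
    HasDerivAt (fun t => ∫ s in a..t, K (t - s) * w s)
      (K 0 * w t₀ + ∫ s in a..t₀, deriv K (t₀ - s) * w s) t₀ := by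
  have hK' : Continuous (deriv K) := hK.continuous_deriv le_rfl
  have hKd : ∀ x, HasDerivAt K (deriv K x) x := fun x =>
    (hK.differentiable one_ne_zero x).hasDerivAt
  simpa using hasDerivAt_integral_leibniz (g := fun t s => K (t - s) * w s)
    (g' := fun t s => deriv K (t - s) * w s) (by fun_prop) (by fun_prop)
    (fun t s => by
      simpa using ((hKd (t - s)).comp t ((hasDerivAt_id t).sub_const s)).mul_const (w s))
    a t₀

theorem exists_contDiff_eqOn_of_contDiffOn_Ici {f : ℝ → ℝ} {a : ℝ}
    (hf : ContDiffOn ℝ 1 f (Ici a)) : ∃ g : ℝ → ℝ, ContDiff ℝ 1 g ∧ EqOn g f (Ici a) := by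
  set f' := derivWithin f (Ici a)
  have hf' : ∀ x ∈ Ici a, HasDerivWithinAt f (f' x) (Ici a) x := fun x hx =>
    (hf.differentiableOn one_ne_zero x hx).hasDerivWithinAt
  set L : ℝ → ℝ := fun x => f a + f' a * (x - a)
  have hL : ∀ x, HasDerivAt L (f' a) x := fun x =>
    ((((hasDerivAt_id x).sub_const a).const_mul (f' a)).const_add (f a)).congr_deriv (mul_one _)
  set g : ℝ → ℝ := fun x => if x ≤ a then L x else f x
  have hgL : EqOn g L (Iic a) := fun x hx => if_pos hx
  have hgf : EqOn g f (Ici a) := fun x hx => by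
    rcases (mem_Ici.1 hx).eq_or_lt with rfl | h
    · simp [g, L]
    · exact if_neg (not_le.2 h)
  have hg : ∀ x, HasDerivAt g (f' (max x a)) x := by
    intro x
    rcases lt_trichotomy x a with h | rfl | h
    · rw [max_eq_right h.le]
      exact (hL x).congr_of_eventuallyEq (hgL.eventuallyEq_of_mem (Iic_mem_nhds h))
    · have h := ((hL x).hasDerivWithinAt.congr_of_mem hgL self_mem_Iic).union
        ((hf' x self_mem_Ici).congr_of_mem hgf self_mem_Ici)
      rw [max_self]
      rwa [Iic_union_Ici, hasDerivWithinAt_univ] at h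
    · rw [max_eq_left h.le]
      exact ((hf' x h.le).hasDerivAt (Ici_mem_nhds h)).congr_of_eventuallyEq
        (hgf.eventuallyEq_of_mem (Ici_mem_nhds h))
  refine ⟨g, contDiff_one_iff_deriv.2 ⟨fun x => (hg x).differentiableAt, ?_⟩, hgf⟩
  rw [show deriv g = fun x => f' (max x a) from funext fun x => (hg x).deriv]
  exact (hf.continuousOn_derivWithin (uniqueDiffOn_Ici a) le_rfl).comp_continuous
    (continuous_id.max continuous_const) fun x => le_max_right x a

theorem differentiableOn_integral_comp_sub_mul {k v : ℝ → ℝ} {T : ℝ} (hT : 0 ≤ T)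
    (hk : ContDiffOn ℝ 1 k (Ici 0)) (hv : ContinuousOn v (Icc 0 T)) :
    DifferentiableOn ℝ (fun t => ∫ s in (0:ℝ)..t, k (t - s) * v s) (Icc 0 T) := by
  obtain ⟨K, hK, hKk⟩ := exists_contDiff_eqOn_of_contDiffOn_Ici hk
  set w := IccExtend hT ((Icc 0 T).domRestrict v)
  have hw : Continuous w := hv.domRestrict.Icc_extend'
  have heq : EqOn (fun t => ∫ s in (0:ℝ)..t, k (t - s) * v s)
      (fun t => ∫ s in (0:ℝ)..t, K (t - s) * w s) (Icc 0 T) := fun t ht => by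
    refine intervalIntegral.integral_congr fun s hs => ?_
    rw [uIcc_of_le ht.1] at hs
    simp only [w, hKk (sub_nonneg.2 hs.2), IccExtend_of_mem _ _ ⟨hs.1, hs.2.trans ht.2⟩,
      domRestrict_apply]
  have hdiff : Differentiable ℝ fun t => ∫ s in (0:ℝ)..t, K (t - s) * w s := fun t =>
    (hasDerivAt_integral_comp_sub_mul hK hw 0 t).differentiableAt
  exact hdiff.differentiableOn.congr heq

theorem eqOn_zero_of_deriv_add_mul_nonpos {G v : ℝ → ℝ} {a b C : ℝ} (hab : a < b) (hC : 0 < C)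
    (hG : DifferentiableOn ℝ G (Icc a b)) (hGa : G a = 0) (hG_nonneg : ∀ t ∈ Icc a b, 0 ≤ G t)
    (hv : ContinuousOn v (Icc a b)) (hv_nonneg : ∀ t ∈ Icc a b, 0 ≤ v t)
    (hineq : ∀ t ∈ Ioo a b, deriv G t + C * v t ≤ 0) :
    EqOn v 0 (Icc a b) := by
  have hCv : ∀ t ∈ Ioo a b, 0 ≤ C * v t := fun t ht =>
    mul_nonneg hC.le (hv_nonneg t (Ioo_subset_Icc_self ht))
  have hanti : AntitoneOn G (Icc a b) := by
    refine antitoneOn_of_deriv_nonpos (convex_Icc a b) hG.continuousOn ?_ fun t ht => ?_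
    · rw [interior_Icc]; exact hG.mono Ioo_subset_Icc_self
    · rw [interior_Icc] at ht; linarith [hineq t ht, hCv t ht]
  have hG_zero : ∀ t ∈ Ioo a b, G =ᶠ[𝓝 t] 0 := fun t ht => by
    filter_upwards [Icc_mem_nhds ht.1 ht.2] with τ hτ
    exact le_antisymm (hGa ▸ hanti (left_mem_Icc.2 hab.le) hτ hτ.1 :) (hG_nonneg τ hτ)
  have hv_zero : EqOn v 0 (Ioo a b) := fun t ht => by
    have h := hineq t ht
    rw [(hG_zero t ht).deriv_eq, Pi.zero_def, deriv_const] at h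
    exact le_antisymm (nonpos_of_mul_nonpos_right (by linarith) hC)
      (hv_nonneg t (Ioo_subset_Icc_self ht))
  exact hv_zero.of_subset_closure hv continuousOn_const Ioo_subset_Icc_self
    (closure_Ioo hab.ne).symm.subset

theorem comparison_vanishing_general (T : ℝ) (hT : 0 < T)
    (k : ℝ → ℝ)
    (hk1 : ContDiffOn ℝ 1 k (Set.Ici 0))
    (hknn : ∀ s ∈ Set.Ici (0:ℝ), 0 ≤ k s)
    (C : ℝ) (hC : 0 < C)
    (v : ℝ → ℝ)
    (hv_cont : ContinuousOn v (Set.Icc 0 T))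
    (hv_nn : ∀ t ∈ Set.Icc (0:ℝ) T, 0 ≤ v t)
    (hineq : ∀ t ∈ Set.Ioc (0:ℝ) T,
      deriv (fun τ => ∫ s in (0:ℝ)..τ, k (τ - s) * v s) t + C * v t ≤ 0) :
    ∀ t ∈ Set.Icc (0:ℝ) T, v t = 0 := by
  have hconv_nonneg : ∀ t ∈ Icc (0:ℝ) T, 0 ≤ ∫ s in (0:ℝ)..t, k (t - s) * v s := fun t ht =>
    intervalIntegral.integral_nonneg ht.1 fun s hs =>
      mul_nonneg (hknn _ (sub_nonneg.2 hs.2)) (hv_nn s ⟨hs.1, hs.2.trans ht.2⟩)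
  exact eqOn_zero_of_deriv_add_mul_nonpos hT hC
    (differentiableOn_integral_comp_sub_mul hT.le hk1 hv_cont) intervalIntegral.integral_same
    hconv_nonneg hv_cont hv_nn fun t ht => hineq t (Ioo_subset_Ioc_self ht)

/-- Vanishing lemma: a continuous nonnegative `v` satisfying
`∂ₜ(k ∗ v)(t) + C v(t) ≤ 0` on `(0,T]` for a nonnegative, nonincreasing, continuously
differentiable kernel `k` must vanish identically on `[0,T]`. -/
theorem comparison_vanishing (T : ℝ) (hT : 0 < T)
    (k : ℝ → ℝ)
    (hk1 : ContDiffOn ℝ 1 k (Set.Ici 0))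
    (hknn : ∀ s ∈ Set.Ici (0:ℝ), 0 ≤ k s)
    (hkmono : AntitoneOn k (Set.Ici 0))
    (C : ℝ) (hC : 0 < C)
    (v : ℝ → ℝ)
    (hv_cont : ContinuousOn v (Set.Icc 0 T))
    (hv_nn : ∀ t ∈ Set.Icc (0:ℝ) T, 0 ≤ v t)
    (hineq : ∀ t ∈ Set.Ioc (0:ℝ) T,
      deriv (fun τ => ∫ s in (0:ℝ)..τ, k (τ - s) * v s) t + C * v t ≤ 0) :
    ∀ t ∈ Set.Icc (0:ℝ) T, v t = 0 :=
  comparison_vanishing_general T hT k hk1 hknn C hC v hv_cont hv_nn hineq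
end
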